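/- Let p ≥ 3 be prime, B : ℕ × ℕ → ℤ satisfy Jenkins' identity (as above), and suppose (D/p) = 1. Then for all n ≥ 1: B(D, p^{2n}d) = pⁿB(p^{2n}D, d) − Σ_{k=0}^{n-1} p^{k+1}B(p^{2k}D, d/p²) + Σ_{k=0}^{n-1} (1 − (−d/p))p^k B(p^{2k}D, d). Consequently the sequence n ↦ B(D, p^{2n}d) converges in ℤ_p, and if additionally (−d/p) = 1 and p² ∤ d then B(D, p^{2n}d) = pⁿ B(p^{2n}D, d), so the p-adic limit is 0. -/

import Mathlib

/-!
Since `(D/p) = 1` forces `p² ∤ D`, the case `n = 1` of Jenkins' identity expresses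
`a(n+1) = B(D, p^{2(n+1)}d)` through `a(n)`, `a(n-1)` and `B(p²D, p^{2n}d)`. The last one is
expanded by Jenkins' identity for `p²D`, where `(p²D/p) = 0` kills all but the `k = n-1` terms.
The one term of the wrong shape, `(−d/p) B(p^{n+1}D, d)`, can be replaced by
`(−d/p) B(p^{2n}D, d)` because `(−d/p) B(p^i D, d)` does not depend on `i ≥ 3`: compare the two
expansions of `B(p²E, p⁴d)` given by the identity with `n = 2` and by the case `n = 1` applied
twice. The resulting recursion gives `pⁿ ∣ a(n+1) − a(n)`, hence the closed formula by
telescoping and `p`-adic convergence of `a`.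
-/

open Filter Finset

/-- Jenkins' identity for the traces of singular moduli `B(D,d)`, with the convention
that `B(a,b) = 0` for invalid arguments. -/
def JenkinsId (p : ℕ) [Fact p.Prime] (B : ℕ → ℕ → ℤ) : Prop :=
  ∀ D d n : ℕ, 1 ≤ n →
    B D (p ^ (2 * n) * d) =
      (p : ℤ) ^ n * B (p ^ (2 * n) * D) d
        + ∑ k ∈ range n, (legendreSym p (D : ℤ)) ^ (n - k - 1) *
            ((if p ^ 2 ∣ D then B (D / p ^ 2) (p ^ (2 * k) * d) else 0)
              - (p : ℤ) ^ (k + 1) *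
                (if p ^ 2 ∣ d then B (p ^ (2 * k) * D) (d / p ^ 2) else 0))
        + ∑ k ∈ range n, (legendreSym p (D : ℤ)) ^ (n - k - 1) *
            ((legendreSym p (D : ℤ) - legendreSym p (-(d : ℤ))) * (p : ℤ) ^ k *
              B (p ^ k * D) d)

theorem sum_range_succ_zero_pow_mul {R : Type*} [CommSemiring R] (m : ℕ) (f : ℕ → R) :
    ∑ k ∈ range (m + 1), (0 : R) ^ (m + 1 - k - 1) * f k = f m := by
  rw [sum_range_succ, sum_eq_zero fun k hk => ?_]
  · simp
  · rw [zero_pow (by simp at hk; omega), zero_mul]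

theorem pow_add_two_mul_div_sq {p : ℕ} (hp : 0 < p) (m E : ℕ) :
    p ^ (m + 2) * E / p ^ 2 = p ^ m * E := by
  rw [pow_add, mul_comm (p ^ m), mul_assoc, Nat.mul_div_cancel_left _ (pow_pos hp 2)]

section Legendre

variable {p : ℕ} [Fact p.Prime]

theorem legendreSym_eq_zero_of_dvd {a : ℤ} (h : (p : ℤ) ∣ a) :
    legendreSym p a = 0 :=
  (legendreSym.eq_zero_iff p a).2 ((ZMod.intCast_zmod_eq_zero_iff_dvd a p).2 h)

theorem legendreSym_pow_mul_eq_zero {m : ℕ} (hm : m ≠ 0) (D : ℕ) :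
    legendreSym p ((p ^ m * D : ℕ) : ℤ) = 0 :=
  legendreSym_eq_zero_of_dvd <| by
    push_cast; exact (dvd_pow_self _ hm).mul_right _

theorem legendreSym_neg_pow_mul_eq_zero {m : ℕ} (hm : m ≠ 0) (d : ℕ) :
    legendreSym p (-((p ^ m * d : ℕ) : ℤ)) = 0 :=
  legendreSym_eq_zero_of_dvd <| by
    push_cast; exact ((dvd_pow_self _ hm).mul_right _).neg_right

theorem not_sq_dvd_of_legendreSym_eq_one {D : ℕ} (hD : legendreSym p (D : ℤ) = 1) :
    ¬ p ^ 2 ∣ D := fun h => by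
  rw [legendreSym_eq_zero_of_dvd] at hD
  · exact zero_ne_one hD
  · exact Int.natCast_dvd_natCast.2 ((dvd_pow_self p two_ne_zero).trans h)

end Legendre

namespace Padic

theorem inv_natCast_lt_one (p : ℕ) [Fact p.Prime] : (p : ℝ)⁻¹ < 1 :=
  inv_lt_one_of_one_lt₀ (by exact_mod_cast (Fact.out : p.Prime).one_lt)

theorem exists_tendsto_of_pow_dvd_sub_succ {p : ℕ} [Fact p.Prime] {a : ℕ → ℤ}
    (h : ∀ n, (p : ℤ) ^ n ∣ a (n + 1) - a n) :
    ∃ L : ℚ_[p], Tendsto (fun n => (a n : ℚ_[p])) atTop (nhds L) := by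
  refine cauchySeq_tendsto_of_complete <|
    cauchySeq_of_le_geometric _ 1 (inv_natCast_lt_one p) fun n => ?_
  rw [dist_comm, dist_eq_norm, ← Int.cast_sub, one_mul, inv_pow, ← zpow_natCast, ← zpow_neg]
  exact (norm_int_le_pow_iff_dvd _ n).2 (h n)

theorem tendsto_zero_of_pow_dvd {p : ℕ} [Fact p.Prime] {a : ℕ → ℤ}
    (h : ∀ n, (p : ℤ) ^ n ∣ a n) :
    Tendsto (fun n => (a n : ℚ_[p])) atTop (nhds 0) := by
  refine squeeze_zero_norm (fun n => ?_)
    (tendsto_pow_atTop_nhds_zero_of_lt_one (by positivity) (inv_natCast_lt_one p))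
  rw [inv_pow, ← zpow_natCast, ← zpow_neg]
  exact (norm_int_le_pow_iff_dvd _ n).2 (h n)

end Padic

namespace JenkinsId

variable {p : ℕ} [Fact p.Prime] {B : ℕ → ℕ → ℤ} {D : ℕ}

theorem apply_sq_mul_pow_succ (hJ : JenkinsId p B) (E d m : ℕ) :
    B (p ^ 2 * E) (p ^ (2 * (m + 1)) * d) =
      (p : ℤ) ^ (m + 1) * B (p ^ (2 * (m + 2)) * E) d + B E (p ^ (2 * m) * d)
        - (p : ℤ) ^ (m + 1) *
            (if p ^ 2 ∣ d then B (p ^ (2 * (m + 1)) * E) (d / p ^ 2) else 0)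
        - legendreSym p (-(d : ℤ)) * (p : ℤ) ^ m * B (p ^ (m + 2) * E) d := by
  have h := hJ (p ^ 2 * E) d (m + 1) (by omega)
  rw [legendreSym_pow_mul_eq_zero two_ne_zero, sum_range_succ_zero_pow_mul,
    sum_range_succ_zero_pow_mul, if_pos (dvd_mul_right _ _),
    Nat.mul_div_cancel_left _ (pow_pos (Fact.out : p.Prime).pos 2)] at h
  rw [h]
  ring_nf

theorem legendreSym_mul_pow_three_eq_pow_four (hJ : JenkinsId p B) (E d : ℕ) :
    legendreSym p (-(d : ℤ)) * B (p ^ 3 * E) d =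
      legendreSym p (-(d : ℤ)) * B (p ^ 4 * E) d := by
  have hp : (p : ℤ) ≠ 0 := by exact_mod_cast (Fact.out : p.Prime).ne_zero
  have h₂ := hJ.apply_sq_mul_pow_succ E d 1
  have h₀ := hJ.apply_sq_mul_pow_succ E (p ^ 2 * d) 0
  have h₀' := hJ.apply_sq_mul_pow_succ (p ^ 2 * E) d 0
  rw [legendreSym_neg_pow_mul_eq_zero two_ne_zero, if_pos (dvd_mul_right _ _),
    Nat.mul_div_cancel_left _ (pow_pos (Fact.out : p.Prime).pos 2)] at h₀
  simp only [← pow_add, ← mul_assoc, Nat.reduceMul, Nat.reduceAdd, pow_one, pow_zero, mul_one,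
    one_mul, zero_mul, sub_zero] at h₂ h₀ h₀'
  refine mul_left_cancel₀ hp ?_
  linear_combination h₂ - h₀ - (p : ℤ) * h₀'

theorem legendreSym_mul_pow_add_three (hJ : JenkinsId p B) (E d j : ℕ) :
    legendreSym p (-(d : ℤ)) * B (p ^ (j + 3) * E) d =
      legendreSym p (-(d : ℤ)) * B (p ^ 3 * E) d := by
  induction j with
  | zero => rfl
  | succ j ih =>
    rw [← ih, show p ^ (j + 1 + 3) * E = p ^ 4 * (p ^ j * E) by ring,
      show p ^ (j + 3) * E = p ^ 3 * (p ^ j * E) by ring]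
    exact (hJ.legendreSym_mul_pow_three_eq_pow_four _ d).symm

theorem legendreSym_mul_pow_add_two (hJ : JenkinsId p B) (E d m : ℕ) :
    legendreSym p (-(d : ℤ)) * B (p ^ (m + 2) * E) d =
      legendreSym p (-(d : ℤ)) * B (p ^ (2 * (m + 1)) * E) d := by
  cases m with
  | zero => rfl
  | succ m =>
    rw [show 2 * (m + 1 + 1) = (2 * m + 1) + 3 by ring, hJ.legendreSym_mul_pow_add_three E d m,
      hJ.legendreSym_mul_pow_add_three E d (2 * m + 1)]

theorem apply_sq_mul_of_legendreSym_eq_one (hJ : JenkinsId p B)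
    (hD : legendreSym p (D : ℤ) = 1) (e : ℕ) :
    B D (p ^ 2 * e) = p * B (p ^ 2 * D) e - p * (if p ^ 2 ∣ e then B D (e / p ^ 2) else 0)
      + (1 - legendreSym p (-(e : ℤ))) * B D e := by
  have h := hJ D e 1 le_rfl
  simp only [hD, if_neg (not_sq_dvd_of_legendreSym_eq_one hD), sum_range_one] at h
  rw [h]
  ring_nf

theorem apply_pow_succ_of_legendreSym_eq_one (hJ : JenkinsId p B)
    (hD : legendreSym p (D : ℤ) = 1) (d n : ℕ) :
    B D (p ^ (2 * (n + 1)) * d) =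
      B D (p ^ (2 * n) * d) + p ^ (n + 1) * B (p ^ (2 * (n + 1)) * D) d
        - p ^ (n + 1) * (if p ^ 2 ∣ d then B (p ^ (2 * n) * D) (d / p ^ 2) else 0)
        - legendreSym p (-(d : ℤ)) * p ^ n * B (p ^ (2 * n) * D) d := by
  cases n with
  | zero =>
    simp only [mul_zero, zero_add, pow_zero, one_mul, mul_one, pow_one]
    rw [hJ.apply_sq_mul_of_legendreSym_eq_one hD]
    ring
  | succ m =>
    have h₁ := hJ.apply_sq_mul_of_legendreSym_eq_one hD (p ^ (2 * (m + 1)) * d)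
    rw [legendreSym_neg_pow_mul_eq_zero (by omega),
      if_pos (dvd_mul_of_dvd_left (pow_dvd_pow p (by omega)) d),
      show 2 * (m + 1) = 2 * m + 2 by ring, pow_add_two_mul_div_sq (Fact.out : p.Prime).pos,
      show p ^ 2 * (p ^ (2 * m + 2) * d) = p ^ (2 * (m + 1 + 1)) * d by ring] at h₁
    have h₂ := hJ.apply_sq_mul_pow_succ D d m
    have h₃ := hJ.legendreSym_mul_pow_add_two D d m
    linear_combination h₁ + (p : ℤ) * h₂ - (p : ℤ) ^ (m + 1) * h₃

theorem apply_pow_of_legendreSym_eq_one (hJ : JenkinsId p B) (hD : legendreSym p (D : ℤ) = 1)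
    (d n : ℕ) :
    B D (p ^ (2 * n) * d) =
      (p : ℤ) ^ n * B (p ^ (2 * n) * D) d
        - ∑ k ∈ range n, (p : ℤ) ^ (k + 1) *
            (if p ^ 2 ∣ d then B (p ^ (2 * k) * D) (d / p ^ 2) else 0)
        + ∑ k ∈ range n, (1 - legendreSym p (-(d : ℤ))) * (p : ℤ) ^ k *
            B (p ^ (2 * k) * D) d := by
  induction n with
  | zero => simp
  | succ n ih =>
    rw [hJ.apply_pow_succ_of_legendreSym_eq_one hD, ih, sum_range_succ, sum_range_succ]
    ring

theorem pow_dvd_apply_pow_succ_sub (hJ : JenkinsId p B) (hD : legendreSym p (D : ℤ) = 1)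
    (d n : ℕ) : (p : ℤ) ^ n ∣ B D (p ^ (2 * (n + 1)) * d) - B D (p ^ (2 * n) * d) :=
  ⟨p * B (p ^ (2 * (n + 1)) * D) d
      - p * (if p ^ 2 ∣ d then B (p ^ (2 * n) * D) (d / p ^ 2) else 0)
      - legendreSym p (-(d : ℤ)) * B (p ^ (2 * n) * D) d,
    by rw [hJ.apply_pow_succ_of_legendreSym_eq_one hD]; ring⟩

end JenkinsId

theorem jenkins_legendre_D_eq_one_general (p : ℕ) [Fact p.Prime]
    (B : ℕ → ℕ → ℤ) (hJ : JenkinsId p B) (D : ℕ) (hD : legendreSym p (D : ℤ) = 1) :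
    (∀ d n : ℕ, 1 ≤ n →
        B D (p ^ (2 * n) * d) =
          (p : ℤ) ^ n * B (p ^ (2 * n) * D) d
            - ∑ k ∈ range n, (p : ℤ) ^ (k + 1) *
                (if p ^ 2 ∣ d then B (p ^ (2 * k) * D) (d / p ^ 2) else 0)
            + ∑ k ∈ range n, (1 - legendreSym p (-(d : ℤ))) * (p : ℤ) ^ k *
                B (p ^ (2 * k) * D) d) ∧
      (∀ d : ℕ, ∃ L : ℚ_[p],
        Tendsto (fun n : ℕ => ((B D (p ^ (2 * n) * d) : ℤ) : ℚ_[p])) atTop (nhds L)) ∧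
      (∀ d : ℕ, legendreSym p (-(d : ℤ)) = 1 → ¬ p ^ 2 ∣ d →
        (∀ n : ℕ, 1 ≤ n →
            B D (p ^ (2 * n) * d) = (p : ℤ) ^ n * B (p ^ (2 * n) * D) d) ∧
          Tendsto (fun n : ℕ => ((B D (p ^ (2 * n) * d) : ℤ) : ℚ_[p])) atTop (nhds 0)) := by
  refine ⟨fun d n _ => hJ.apply_pow_of_legendreSym_eq_one hD d n,
    fun d => Padic.exists_tendsto_of_pow_dvd_sub_succ (hJ.pow_dvd_apply_pow_succ_sub hD d),
    fun d hd hd₂ => ?_⟩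
  have h n : B D (p ^ (2 * n) * d) = (p : ℤ) ^ n * B (p ^ (2 * n) * D) d := by
    simpa [hd, hd₂] using hJ.apply_pow_of_legendreSym_eq_one hD d n
  exact ⟨fun n _ => h n, Padic.tendsto_zero_of_pow_dvd fun n => Dvd.intro _ (h n).symm⟩

/-- If `(D/p) = 1` then Jenkins' identity simplifies, the sequence `B(D, p^{2n}d)`
converges `p`-adically, and if moreover `(−d/p) = 1` and `p² ∤ d` then
`B(D, p^{2n}d) = pⁿ B(p^{2n}D, d)`, so the `p`-adic limit is `0`. -/
theorem jenkins_legendre_D_eq_one (p : ℕ) [Fact p.Prime] (hp3 : 3 ≤ p)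
    (B : ℕ → ℕ → ℤ) (hJ : JenkinsId p B) (D : ℕ) (hD : legendreSym p (D : ℤ) = 1) :
    (∀ d n : ℕ, 1 ≤ n →
        B D (p ^ (2 * n) * d) =
          (p : ℤ) ^ n * B (p ^ (2 * n) * D) d
            - ∑ k ∈ range n, (p : ℤ) ^ (k + 1) *
                (if p ^ 2 ∣ d then B (p ^ (2 * k) * D) (d / p ^ 2) else 0)
            + ∑ k ∈ range n, (1 - legendreSym p (-(d : ℤ))) * (p : ℤ) ^ k *
                B (p ^ (2 * k) * D) d) ∧
      (∀ d : ℕ, ∃ L : ℚ_[p],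
        Tendsto (fun n : ℕ => ((B D (p ^ (2 * n) * d) : ℤ) : ℚ_[p])) atTop (nhds L)) ∧
      (∀ d : ℕ, legendreSym p (-(d : ℤ)) = 1 → ¬ p ^ 2 ∣ d →
        (∀ n : ℕ, 1 ≤ n →
            B D (p ^ (2 * n) * d) = (p : ℤ) ^ n * B (p ^ (2 * n) * D) d) ∧
          Tendsto (fun n : ℕ => ((B D (p ^ (2 * n) * d) : ℤ) : ℚ_[p])) atTop (nhds 0)) :=
  jenkins_legendre_D_eq_one_general p B hJ D hD
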